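/- arXiv:math/0502566 — 10 statements merged into one kernel-verified Lean document; each statement's English description precedes it below -/
import Mathlib

section
/- Let m be an integer and let f : ℂ × ℂ → ℂ be real-differentiable with f(e^{it}α, e^{it}β) = e^{imt} f(α, β) for all t ∈ ℝ and all (α, β) ∈ ℂ². Then (twist₋ f)(e^{it}α, e^{it}β) = e^{i(m−2)t} (twist₋ f)(α, β) and (twist₊ f)(e^{it}α, e^{it}β) = e^{i(m+2)t} (twist₊ f)(α, β) for all t ∈ ℝ and all (α, β) ∈ ℂ². -/
/-- The real directional derivative `D_v f` of `f : ℂ × ℂ → ℂ` in direction `v ∈ ℂ²`. -/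
noncomputable def dirDeriv (v : ℂ × ℂ) (f : ℂ × ℂ → ℂ) (x : ℂ × ℂ) : ℂ :=
  fderiv ℝ f x v

/-- The Wirtinger derivative `∂f/∂α = ½(D_{(1,0)}f − i·D_{(i,0)}f)`. -/
noncomputable def wirtA (f : ℂ × ℂ → ℂ) (x : ℂ × ℂ) : ℂ :=
  (1 / 2) * (dirDeriv (1, 0) f x - Complex.I * dirDeriv (Complex.I, 0) f x)

/-- The Wirtinger derivative `∂f/∂ᾱ = ½(D_{(1,0)}f + i·D_{(i,0)}f)`. -/
noncomputable def wirtABar (f : ℂ × ℂ → ℂ) (x : ℂ × ℂ) : ℂ :=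
  (1 / 2) * (dirDeriv (1, 0) f x + Complex.I * dirDeriv (Complex.I, 0) f x)

/-- The Wirtinger derivative `∂f/∂β = ½(D_{(0,1)}f − i·D_{(0,i)}f)`. -/
noncomputable def wirtB (f : ℂ × ℂ → ℂ) (x : ℂ × ℂ) : ℂ :=
  (1 / 2) * (dirDeriv (0, 1) f x - Complex.I * dirDeriv (0, Complex.I) f x)

/-- The Wirtinger derivative `∂f/∂β̄ = ½(D_{(0,1)}f + i·D_{(0,i)}f)`. -/
noncomputable def wirtBBar (f : ℂ × ℂ → ℂ) (x : ℂ × ℂ) : ℂ :=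
  (1 / 2) * (dirDeriv (0, 1) f x + Complex.I * dirDeriv (0, Complex.I) f x)

/-- The negative twist operator `(twist₋ f)(α,β) = −β̄·(∂f/∂α)(α,β) + ᾱ·(∂f/∂β)(α,β)`. -/
noncomputable def twistMinus (f : ℂ × ℂ → ℂ) (x : ℂ × ℂ) : ℂ :=
  -(starRingEnd ℂ) x.2 * wirtA f x + (starRingEnd ℂ) x.1 * wirtB f x

/-- The positive twist operator `(twist₊ f)(α,β) = −β·(∂f/∂ᾱ)(α,β) + α·(∂f/∂β̄)(α,β)`. -/
noncomputable def twistPlus (f : ℂ × ℂ → ℂ) (x : ℂ × ℂ) : ℂ :=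
  -x.2 * wirtABar f x + x.1 * wirtBBar f x

/-- The Euclidean Laplacian of `f : ℂ × ℂ → ℂ` viewed as a function on `ℝ⁴`:
`Δf = D_{(1,0)}D_{(1,0)}f + D_{(i,0)}D_{(i,0)}f + D_{(0,1)}D_{(0,1)}f + D_{(0,i)}D_{(0,i)}f`. -/
noncomputable def laplacian (f : ℂ × ℂ → ℂ) (x : ℂ × ℂ) : ℂ :=
  dirDeriv (1, 0) (dirDeriv (1, 0) f) x
    + dirDeriv (Complex.I, 0) (dirDeriv (Complex.I, 0) f) x
    + dirDeriv (0, 1) (dirDeriv (0, 1) f) x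
    + dirDeriv (0, Complex.I) (dirDeriv (0, Complex.I) f) x


open Complex

private lemma decomp1 (D : ℂ × ℂ →L[ℝ] ℂ) (z : ℂ) :
    D (z, 0) = (z.re : ℂ) * D (1, 0) + (z.im : ℂ) * D (I, 0) := by
  have h : (z, (0:ℂ)) = z.re • ((1:ℂ), (0:ℂ)) + z.im • (I, (0:ℂ)) := by
    ext <;> simp [Complex.ext_iff]
  rw [h, map_add, map_smul, map_smul, Complex.real_smul, Complex.real_smul]

private lemma decomp2 (D : ℂ × ℂ →L[ℝ] ℂ) (z : ℂ) :
    D (0, z) = (z.re : ℂ) * D (0, 1) + (z.im : ℂ) * D (0, I) := by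
  have h : ((0:ℂ), z) = z.re • ((0:ℂ), (1:ℂ)) + z.im • ((0:ℂ), I) := by
    ext <;> simp [Complex.ext_iff]
  rw [h, map_add, map_smul, map_smul, Complex.real_smul, Complex.real_smul]

private lemma key (m : ℤ) (f : ℂ × ℂ → ℂ) (hf : Differentiable ℝ f)
    (hm : ∀ (t : ℝ) (α β : ℂ),
      f (Complex.exp (Complex.I * t) * α, Complex.exp (Complex.I * t) * β)
        = Complex.exp (Complex.I * (m * t)) * f (α, β))
    (t : ℝ) (x w : ℂ × ℂ) :
    fderiv ℝ f (Complex.exp (Complex.I * t) • x) w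
      = Complex.exp (Complex.I * (m * t)) *
          fderiv ℝ f x ((Complex.exp (Complex.I * t))⁻¹ • w) := by
  set c := Complex.exp (Complex.I * t) with hc
  set e := Complex.exp (Complex.I * (m * t)) with he
  have hc0 : c ≠ 0 := Complex.exp_ne_zero _
  have hL : HasFDerivAt (fun p : ℂ × ℂ => c • p)
      (c • ContinuousLinearMap.id ℝ (ℂ × ℂ)) x := by
    exact (c • ContinuousLinearMap.id ℝ (ℂ × ℂ)).hasFDerivAt (x := x)
  have h1 : HasFDerivAt (fun p => f (c • p))
      ((fderiv ℝ f (c • x)).comp (c • ContinuousLinearMap.id ℝ (ℂ × ℂ))) x :=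
    ((hf (c • x)).hasFDerivAt).comp x hL
  have h2 : (fun p : ℂ × ℂ => f (c • p)) = fun p => e * f p := by
    funext p
    have := hm t p.1 p.2
    simpa [Prod.smul_def, smul_eq_mul] using this
  rw [h2] at h1
  have h3 : HasFDerivAt (fun p => e * f p) (e • fderiv ℝ f x) x :=
    ((hf x).hasFDerivAt).const_mul e
  have h4 := h1.unique h3
  have h5 := congrArg (fun (L : ℂ × ℂ →L[ℝ] ℂ) => L (c⁻¹ • w)) h4
  simp only [ContinuousLinearMap.comp_apply, ContinuousLinearMap.smul_apply,
    ContinuousLinearMap.coe_smul', Pi.smul_apply, ContinuousLinearMap.id_apply,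
    smul_smul, mul_inv_cancel₀ hc0, one_smul, smul_eq_mul] at h5
  exact h5

private lemma wirt_rot (m : ℤ) (f : ℂ × ℂ → ℂ) (hf : Differentiable ℝ f)
    (hm : ∀ (t : ℝ) (α β : ℂ),
      f (Complex.exp (Complex.I * t) * α, Complex.exp (Complex.I * t) * β)
        = Complex.exp (Complex.I * (m * t)) * f (α, β))
    (t : ℝ) (x : ℂ × ℂ) :
    wirtA f (Complex.exp (Complex.I * t) • x)
      = Complex.exp (Complex.I * (m * t)) * (Complex.exp (Complex.I * t))⁻¹ * wirtA f x ∧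
    wirtB f (Complex.exp (Complex.I * t) • x)
      = Complex.exp (Complex.I * (m * t)) * (Complex.exp (Complex.I * t))⁻¹ * wirtB f x ∧
    wirtABar f (Complex.exp (Complex.I * t) • x)
      = Complex.exp (Complex.I * (m * t)) * Complex.exp (Complex.I * t) * wirtABar f x ∧
    wirtBBar f (Complex.exp (Complex.I * t) • x)
      = Complex.exp (Complex.I * (m * t)) * Complex.exp (Complex.I * t) * wirtBBar f x := by
  have key' := key m f hf hm t x
  set c := Complex.exp (Complex.I * t) with hc
  set e := Complex.exp (Complex.I * (m * t)) with he
  set z := c⁻¹ with hz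
  have hzc : (z.re : ℂ) + z.im * I = z := Complex.re_add_im z
  have hconj : (z.re : ℂ) - z.im * I = c := by
    have h1 : ((z.re:ℂ) - z.im * I) = (starRingEnd ℂ) z := by simp [Complex.ext_iff]
    rw [h1, hz, hc, ← Complex.exp_neg, ← Complex.exp_conj]
    simp
  have e1 : z • ((1:ℂ), (0:ℂ)) = ((z:ℂ), (0:ℂ)) := by simp [Prod.smul_def]
  have e2 : z • ((I:ℂ), (0:ℂ)) = ((z*I:ℂ), (0:ℂ)) := by simp [Prod.smul_def, mul_comm]
  have e3 : z • ((0:ℂ), (1:ℂ)) = ((0:ℂ), (z:ℂ)) := by simp [Prod.smul_def]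
  have e4 : z • ((0:ℂ), (I:ℂ)) = ((0:ℂ), (z*I:ℂ)) := by simp [Prod.smul_def, mul_comm]
  simp only [wirtA, wirtB, wirtABar, wirtBBar, dirDeriv, key', ← hz, e1, e2, e3, e4,
    decomp1 (fderiv ℝ f x) z, decomp1 (fderiv ℝ f x) (z*I),
    decomp2 (fderiv ℝ f x) z, decomp2 (fderiv ℝ f x) (z*I),
    Complex.mul_I_re, Complex.mul_I_im]
  push_cast
  refine ⟨?_, ?_, ?_, ?_⟩
  · linear_combination (e * (fderiv ℝ f x (1,0) - Complex.I * fderiv ℝ f x (I,0)) / 2) * hzc + (e * (z.im:ℂ) * fderiv ℝ f x (I,0) / 2) * Complex.I_sq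
  · linear_combination (e * (fderiv ℝ f x (0,1) - Complex.I * fderiv ℝ f x (0,I)) / 2) * hzc + (e * (z.im:ℂ) * fderiv ℝ f x (0,I) / 2) * Complex.I_sq
  · linear_combination (e * (fderiv ℝ f x (1,0) + Complex.I * fderiv ℝ f x (I,0)) / 2) * hconj + (e * (z.im:ℂ) * fderiv ℝ f x (I,0) / 2) * Complex.I_sq
  · linear_combination (e * (fderiv ℝ f x (0,1) + Complex.I * fderiv ℝ f x (0,I)) / 2) * hconj + (e * (z.im:ℂ) * fderiv ℝ f x (0,I) / 2) * Complex.I_sq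

/-- If `f : ℂ × ℂ → ℂ` is real-differentiable and has twist `m`, i.e.
`f(e^{it}α, e^{it}β) = e^{imt} f(α, β)` for all real `t` and all `(α, β)`, then `twist₋ f`
has twist `m − 2` and `twist₊ f` has twist `m + 2`. -/
theorem twist_operators_shift_twist (m : ℤ) (f : ℂ × ℂ → ℂ) (hf : Differentiable ℝ f)
    (hm : ∀ (t : ℝ) (α β : ℂ),
      f (Complex.exp (Complex.I * t) * α, Complex.exp (Complex.I * t) * β)
        = Complex.exp (Complex.I * (m * t)) * f (α, β)) :
    (∀ (t : ℝ) (α β : ℂ),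
      twistMinus f (Complex.exp (Complex.I * t) * α, Complex.exp (Complex.I * t) * β)
        = Complex.exp (Complex.I * ((m - 2) * t)) * twistMinus f (α, β)) ∧
    (∀ (t : ℝ) (α β : ℂ),
      twistPlus f (Complex.exp (Complex.I * t) * α, Complex.exp (Complex.I * t) * β)
        = Complex.exp (Complex.I * ((m + 2) * t)) * twistPlus f (α, β)) := by
  constructor
  · intro t α β
    obtain ⟨hA, hB, _, _⟩ := wirt_rot m f hf hm t (α, β)
    have hpt : ((Complex.exp (Complex.I*t) * α, Complex.exp (Complex.I*t) * β) : ℂ × ℂ)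
        = Complex.exp (Complex.I*t) • ((α, β) : ℂ × ℂ) := by simp [Prod.smul_def]
    rw [← hpt] at hA hB
    set c := Complex.exp (Complex.I * t) with hc
    set e := Complex.exp (Complex.I * ((m : ℂ) * t)) with he
    have hcc : (starRingEnd ℂ) c = c⁻¹ := by
      rw [hc, ← Complex.exp_neg, ← Complex.exp_conj]; simp
    have hexp : Complex.exp (Complex.I * ((m - 2) * t)) = e * c⁻¹ * c⁻¹ := by
      rw [he, hc, ← Complex.exp_neg, ← Complex.exp_add, ← Complex.exp_add]
      congr 1; ring
    simp only [twistMinus, map_mul, hA, hB, hcc, hexp]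
    ring
  · intro t α β
    obtain ⟨_, _, hA, hB⟩ := wirt_rot m f hf hm t (α, β)
    have hpt : ((Complex.exp (Complex.I*t) * α, Complex.exp (Complex.I*t) * β) : ℂ × ℂ)
        = Complex.exp (Complex.I*t) • ((α, β) : ℂ × ℂ) := by simp [Prod.smul_def]
    rw [← hpt] at hA hB
    set c := Complex.exp (Complex.I * t) with hc
    set e := Complex.exp (Complex.I * ((m : ℂ) * t)) with he
    have hexp : Complex.exp (Complex.I * ((m + 2) * t)) = e * c * c := by
      rw [he, hc, ← Complex.exp_add, ← Complex.exp_add]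
      congr 1; ring
    simp only [twistPlus, hA, hB, hexp]
    ring
end

section
/- Let z, w ∈ ℂ satisfy |z|² + |w|² = 1, let γ : ℂ² → ℂ² be the ℂ-linear map with matrix (z, −conj(w); w, conj(z)), and for a function f : ℂ × ℂ → ℂ define R_γ f = f ∘ γ⁻¹. If f is real-differentiable, then twist₋(R_γ f) = R_γ(twist₋ f) and twist₊(R_γ f) = R_γ(twist₊ f). Consequently, if R_γ f = f then R_γ(twist₋ f) = twist₋ f and R_γ(twist₊ f) = twist₊ f. -/
private lemma key_wirt (f : ℂ × ℂ → ℂ) (y : ℂ × ℂ) (a b : ℂ) :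
    fderiv ℝ f y (a, b) =
      a * wirtA f y + (starRingEnd ℂ) a * wirtABar f y
        + b * wirtB f y + (starRingEnd ℂ) b * wirtBBar f y := by
  have h1 : (a, b) = a.re • ((1:ℂ),(0:ℂ)) + a.im • (Complex.I, (0:ℂ))
      + b.re • ((0:ℂ),(1:ℂ)) + b.im • ((0:ℂ), Complex.I) := by
    simp only [Prod.ext_iff, Prod.smul_fst, Prod.smul_snd, Prod.fst_add, Prod.snd_add,
      Complex.real_smul]
    constructor <;> simp [Complex.ext_iff]
  rw [h1, map_add, map_add, map_add, map_smul, map_smul, map_smul, map_smul]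
  unfold wirtA wirtABar wirtB wirtBBar dirDeriv
  simp only [Complex.real_smul]
  have ha1 : a + (starRingEnd ℂ) a = 2*a.re := by push_cast [Complex.add_conj]; ring
  have ha2 : a - (starRingEnd ℂ) a = 2*a.im*Complex.I := by push_cast [Complex.sub_conj]; ring
  have hb1 : b + (starRingEnd ℂ) b = 2*b.re := by push_cast [Complex.add_conj]; ring
  have hb2 : b - (starRingEnd ℂ) b = 2*b.im*Complex.I := by push_cast [Complex.sub_conj]; ring
  have hI : Complex.I * Complex.I = -1 := Complex.I_mul_I
  set X1 := fderiv ℝ f y (1,0)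
  set X2 := fderiv ℝ f y (Complex.I,0)
  set X3 := fderiv ℝ f y (0,1)
  set X4 := fderiv ℝ f y (0,Complex.I)
  linear_combination (-X1/2) * ha1 + (X2*Complex.I/2) * ha2 + (X2 * a.im) * hI
    + (-X3/2) * hb1 + (X4*Complex.I/2) * hb2 + (X4 * b.im) * hI

/-- Let `z, w ∈ ℂ` with `|z|² + |w|² = 1`, let `γ` be the `ℂ`-linear map
of `ℂ²` with matrix `(z, −w̄; w, z̄)` (an element of `SU(2)`), let `γinv` be its inverse,
and set `R_γ f = f ∘ γ⁻¹`.  If `f` is real-differentiable then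
`twist₋(R_γ f) = R_γ(twist₋ f)` and `twist₊(R_γ f) = R_γ(twist₊ f)`; consequently, if
`R_γ f = f` then `R_γ(twist₋ f) = twist₋ f` and `R_γ(twist₊ f) = twist₊ f`. -/
theorem twist_operators_commute_with_SU2 (z w : ℂ)
    (hzw : ‖z‖ ^ 2 + ‖w‖ ^ 2 = 1)
    (γ γinv : ℂ × ℂ → ℂ × ℂ)
    (hγ : γ = fun p => (z * p.1 - (starRingEnd ℂ) w * p.2,
                        w * p.1 + (starRingEnd ℂ) z * p.2))
    (hγinv₁ : γ ∘ γinv = id) (hγinv₂ : γinv ∘ γ = id)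
    (f : ℂ × ℂ → ℂ) (hf : Differentiable ℝ f) :
    (twistMinus (f ∘ γinv) = (twistMinus f) ∘ γinv ∧
     twistPlus (f ∘ γinv) = (twistPlus f) ∘ γinv) ∧
    (f ∘ γinv = f →
      ((twistMinus f) ∘ γinv = twistMinus f ∧ (twistPlus f) ∘ γinv = twistPlus f)) := by
  have hc : z * (starRingEnd ℂ) z + w * (starRingEnd ℂ) w = 1 := by
    rw [Complex.mul_conj, Complex.mul_conj]
    rw [← Complex.sq_norm, ← Complex.sq_norm]
    exact_mod_cast congrArg (Complex.ofReal) hzw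
  -- the inverse as a continuous linear map
  set L : (ℂ × ℂ) →L[ℝ] (ℂ × ℂ) :=
    ((((starRingEnd ℂ) z) • ContinuousLinearMap.fst ℂ ℂ ℂ
        + ((starRingEnd ℂ) w) • ContinuousLinearMap.snd ℂ ℂ ℂ).prod
      ((-w) • ContinuousLinearMap.fst ℂ ℂ ℂ + z • ContinuousLinearMap.snd ℂ ℂ ℂ)).restrictScalars ℝ
    with hLdef
  have hLapp : ∀ p : ℂ × ℂ, L p = ((starRingEnd ℂ) z * p.1 + (starRingEnd ℂ) w * p.2,
      -w * p.1 + z * p.2) := by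
    intro p
    simp [hLdef, ContinuousLinearMap.prod_apply, smul_eq_mul]
  have hγL : γinv = ⇑L := by
    have h1 : γ ∘ ⇑L = id := by
      funext p
      simp only [Function.comp_apply, hγ, hLapp, id_eq]
      ext
      · simp only; linear_combination p.1 * hc
      · simp only; linear_combination p.2 * hc
    calc γinv = γinv ∘ (γ ∘ ⇑L) := by rw [h1]; rfl
    _ = (γinv ∘ γ) ∘ ⇑L := rfl
    _ = ⇑L := by rw [hγinv₂]; rfl
  have hd : ∀ (x v : ℂ × ℂ), dirDeriv v (f ∘ γinv) x = fderiv ℝ f (γinv x) (L v) := by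
    intro x v
    have hcomp : fderiv ℝ (f ∘ γinv) x = (fderiv ℝ f (γinv x)).comp (fderiv ℝ γinv x) := by
      apply fderiv_comp (x := x) (hf _)
      rw [hγL]; exact L.differentiableAt
    have : fderiv ℝ γinv x = L := by rw [hγL]; exact L.fderiv
    rw [dirDeriv, hcomp, this, ContinuousLinearMap.comp_apply]
  have hfix : ∀ x : ℂ × ℂ, γ (γinv x) = x := fun x => congrFun hγinv₁ x
  have main : twistMinus (f ∘ γinv) = (twistMinus f) ∘ γinv ∧
      twistPlus (f ∘ γinv) = (twistPlus f) ∘ γinv := by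
    constructor <;> funext x <;>
    · set y := γinv x with hy
      have hx1 : x.1 = z * y.1 - (starRingEnd ℂ) w * y.2 := by
        conv_lhs => rw [← hfix x]
        simp [hγ]; rfl
      have hx2 : x.2 = w * y.1 + (starRingEnd ℂ) z * y.2 := by
        conv_lhs => rw [← hfix x]
        simp [hγ]; rfl
      simp only [twistMinus, twistPlus, wirtA, wirtABar, wirtB, wirtBBar, Function.comp_apply]
      simp only [hd, hLapp, ← hy]
      simp only [dirDeriv]
      simp only [key_wirt]
      simp only [map_mul, map_add, map_neg, map_zero, map_one, Complex.conj_conj,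
        Complex.conj_I]
      rw [hx1, hx2]
      set P := wirtA f y; set Q := wirtABar f y; set R := wirtB f y; set S := wirtBBar f y
      try simp only [map_sub, map_add, map_mul, Complex.conj_conj]
      ring_nf
      simp only [Complex.I_sq]
      ring_nf
      first
        | linear_combination ((starRingEnd ℂ) y.1 * R - (starRingEnd ℂ) y.2 * P) * hc
        | linear_combination (y.1 * S - y.2 * Q) * hc
  refine ⟨main, fun hff => ?_⟩
  constructor
  · rw [← main.1, hff]
  · rw [← main.2, hff]
end

section
/- Let f : ℂ × ℂ → ℂ be a smooth (infinitely real-differentiable) function with Δf = 0 everywhere. Then Δ(twist₋ f) = 0 and Δ(twist₊ f) = 0 everywhere; that is, the twist operators take harmonic functions to harmonic functions. -/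
open Complex

section helpers

variable {f g h : ℂ × ℂ → ℂ} {x v w : ℂ × ℂ}

private lemma dirDeriv_smooth (hf : ContDiff ℝ (⊤ : ℕ∞) f) (v : ℂ × ℂ) :
    ContDiff ℝ (⊤ : ℕ∞) (dirDeriv v f) :=
  (hf.fderiv_right (by simp)).clm_apply contDiff_const

private lemma dirDeriv_comm (hf : ContDiff ℝ (⊤ : ℕ∞) f) (v w x) :
    dirDeriv v (dirDeriv w f) x = dirDeriv w (dirDeriv v f) x := by
  have h2 : DifferentiableAt ℝ (fderiv ℝ f) x :=
    ((hf.fderiv_right (m := (⊤ : ℕ∞)) (by simp)).differentiable (by simp)) x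
  have hsym := second_derivative_symmetric
    (fun y => (hf.differentiable (by simp) y).hasFDerivAt) h2.hasFDerivAt v w
  have e : ∀ a b : ℂ × ℂ, dirDeriv a (dirDeriv b f) x = fderiv ℝ (fderiv ℝ f) x a b := by
    intro a b
    show fderiv ℝ (fun y => (fderiv ℝ f y) b) x a = _
    rw [fderiv_clm_apply h2 (differentiableAt_const b)]
    simp
  rw [e, e, hsym]

private lemma dirDeriv_add_pt (hg : DifferentiableAt ℝ g x) (hh : DifferentiableAt ℝ h x) :
    dirDeriv v (fun y => g y + h y) x = dirDeriv v g x + dirDeriv v h x := by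
  simp only [dirDeriv]
  rw [fderiv_fun_add hg hh]
  rfl

private lemma dirDeriv_const_mul_pt (c : ℂ) (hg : DifferentiableAt ℝ g x) :
    dirDeriv v (fun y => c * g y) x = c * dirDeriv v g x := by
  simp only [dirDeriv]
  rw [fderiv_const_mul hg]
  rfl

private lemma dirDeriv_combo_pt (a b : ℂ) (hg : DifferentiableAt ℝ g x)
    (hh : DifferentiableAt ℝ h x) :
    dirDeriv v (fun y => a * g y + b * h y) x = a * dirDeriv v g x + b * dirDeriv v h x := by
  rw [dirDeriv_add_pt (hg.const_mul a) (hh.const_mul b), dirDeriv_const_mul_pt a hg,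
    dirDeriv_const_mul_pt b hh]

private lemma dirDeriv_clm_mul_pt (c : (ℂ × ℂ) →L[ℝ] ℂ) (hg : DifferentiableAt ℝ g x) :
    dirDeriv v (fun y => c y * g y) x = c v * g x + c x * dirDeriv v g x := by
  simp only [dirDeriv]
  rw [fderiv_fun_mul (c.differentiable.differentiableAt) hg]
  simp only [ContinuousLinearMap.add_apply, ContinuousLinearMap.smul_apply,
    ContinuousLinearMap.fderiv, smul_eq_mul]
  ring

private lemma dirDeriv_add4_pt {p q r s : ℂ × ℂ → ℂ} (hp : DifferentiableAt ℝ p x)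
    (hq : DifferentiableAt ℝ q x) (hr : DifferentiableAt ℝ r x) (hs : DifferentiableAt ℝ s x) :
    dirDeriv v (fun y => p y + q y + r y + s y) x
      = dirDeriv v p x + dirDeriv v q x + dirDeriv v r x + dirDeriv v s x := by
  simp only [dirDeriv]
  rw [fderiv_fun_add ((hp.fun_add hq).fun_add hr) hs, fderiv_fun_add (hp.fun_add hq) hr, fderiv_fun_add hp hq]
  rfl

private lemma lap_add (hg : ContDiff ℝ (⊤ : ℕ∞) g) (hh : ContDiff ℝ (⊤ : ℕ∞) h) (x : ℂ × ℂ) :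
    laplacian (fun y => g y + h y) x = laplacian g x + laplacian h x := by
  have key : ∀ v : ℂ × ℂ, dirDeriv v (dirDeriv v (fun y => g y + h y)) x
      = dirDeriv v (dirDeriv v g) x + dirDeriv v (dirDeriv v h) x := by
    intro v
    have h1 : dirDeriv v (fun y => g y + h y) = fun y => dirDeriv v g y + dirDeriv v h y := by
      funext y; exact dirDeriv_add_pt (hg.differentiable (by simp) y) (hh.differentiable (by simp) y)
    rw [h1]
    exact dirDeriv_add_pt ((dirDeriv_smooth hg v).differentiable (by simp) x)
      ((dirDeriv_smooth hh v).differentiable (by simp) x)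
  simp only [laplacian, key]
  ring

private lemma lap_combo (a b : ℂ) (hg : ContDiff ℝ (⊤ : ℕ∞) g) (hh : ContDiff ℝ (⊤ : ℕ∞) h) (x : ℂ × ℂ) :
    laplacian (fun y => a * g y + b * h y) x = a * laplacian g x + b * laplacian h x := by
  have key : ∀ v : ℂ × ℂ, dirDeriv v (dirDeriv v (fun y => a * g y + b * h y)) x
      = a * dirDeriv v (dirDeriv v g) x + b * dirDeriv v (dirDeriv v h) x := by
    intro v
    have h1 : dirDeriv v (fun y => a * g y + b * h y)
        = fun y => a * dirDeriv v g y + b * dirDeriv v h y := by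
      funext y
      exact dirDeriv_combo_pt a b (hg.differentiable (by simp) y) (hh.differentiable (by simp) y)
    rw [h1]
    exact dirDeriv_combo_pt a b ((dirDeriv_smooth hg v).differentiable (by simp) x)
      ((dirDeriv_smooth hh v).differentiable (by simp) x)
  simp only [laplacian, key]
  ring

private lemma lap_clm_mul (c : (ℂ × ℂ) →L[ℝ] ℂ) (hg : ContDiff ℝ (⊤ : ℕ∞) g) (x : ℂ × ℂ) :
    laplacian (fun y => c y * g y) x =
      2 * (c (1, 0) * dirDeriv (1, 0) g x + c (I, 0) * dirDeriv (I, 0) g x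
        + c (0, 1) * dirDeriv (0, 1) g x + c (0, I) * dirDeriv (0, I) g x)
      + c x * laplacian g x := by
  have key : ∀ v : ℂ × ℂ, dirDeriv v (dirDeriv v (fun y => c y * g y)) x
      = 2 * (c v * dirDeriv v g x) + c x * dirDeriv v (dirDeriv v g) x := by
    intro v
    have h1 : dirDeriv v (fun y => c y * g y)
        = fun y => c v * g y + c y * dirDeriv v g y := by
      funext y
      exact dirDeriv_clm_mul_pt c (hg.differentiable (by simp) y)
    rw [h1, dirDeriv_add_pt ((hg.differentiable (by simp) x).const_mul _)
        ((c.differentiable.differentiableAt).fun_mul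
          ((dirDeriv_smooth hg v).differentiable (by simp) x)),
      dirDeriv_const_mul_pt _ (hg.differentiable (by simp) x),
      dirDeriv_clm_mul_pt c ((dirDeriv_smooth hg v).differentiable (by simp) x)]
    ring
  simp only [laplacian, key]
  ring

private lemma lap_dirDeriv (hf : ContDiff ℝ (⊤ : ℕ∞) f) (u : ℂ × ℂ) (x : ℂ × ℂ) :
    laplacian (dirDeriv u f) x = dirDeriv u (laplacian f) x := by
  have hcomm : ∀ v : ℂ × ℂ, dirDeriv v (dirDeriv v (dirDeriv u f)) x
      = dirDeriv u (dirDeriv v (dirDeriv v f)) x := by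
    intro v
    have h1 : dirDeriv v (dirDeriv u f) = dirDeriv u (dirDeriv v f) := by
      funext y; exact dirDeriv_comm hf v u y
    rw [h1]
    exact dirDeriv_comm (dirDeriv_smooth hf v) v u x
  have d : ∀ v : ℂ × ℂ, DifferentiableAt ℝ (dirDeriv v (dirDeriv v f)) x := fun v =>
    (dirDeriv_smooth (dirDeriv_smooth hf v) v).differentiable (by simp) x
  have hlap : laplacian f = fun y =>
      dirDeriv (1, 0) (dirDeriv (1, 0) f) y + dirDeriv (I, 0) (dirDeriv (I, 0) f) y
      + dirDeriv (0, 1) (dirDeriv (0, 1) f) y + dirDeriv (0, I) (dirDeriv (0, I) f) y := rfl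
  rw [hlap]
  simp only [laplacian]
  rw [dirDeriv_add4_pt (d _) (d _) (d _) (d _), hcomm, hcomm, hcomm, hcomm]

end helpers


/-- If `f : ℂ × ℂ → ℂ` is smooth and harmonic (`Δf = 0` everywhere),
then `twist₋ f` and `twist₊ f` are harmonic as well. -/
theorem twist_operators_preserve_harmonicity (f : ℂ × ℂ → ℂ) (hf : ContDiff ℝ (⊤ : ℕ∞) f)
    (hharm : ∀ x : ℂ × ℂ, laplacian f x = 0) :
    (∀ x : ℂ × ℂ, laplacian (twistMinus f) x = 0) ∧
    (∀ x : ℂ × ℂ, laplacian (twistPlus f) x = 0) := by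
  have hDf : ∀ v : ℂ × ℂ, ContDiff ℝ (⊤ : ℕ∞) (dirDeriv v f) := dirDeriv_smooth hf
  have hDfd : ∀ (v : ℂ × ℂ) (x : ℂ × ℂ), DifferentiableAt ℝ (dirDeriv v f) x := fun v x =>
    (hDf v).differentiable (by simp) x
  have hlap0 : laplacian f = fun _ => (0 : ℂ) := funext hharm
  have hlapD : ∀ (u : ℂ × ℂ) (x : ℂ × ℂ), laplacian (dirDeriv u f) x = 0 := by
    intro u x
    rw [lap_dirDeriv hf u x, hlap0]
    simp [dirDeriv]
  -- combo forms of the Wirtinger derivatives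
  have hAeq : wirtA f = fun y =>
      (1 / 2 : ℂ) * dirDeriv (1, 0) f y + (-(1 / 2) * I) * dirDeriv (I, 0) f y := by
    funext y; simp only [wirtA]; ring
  have hABeq : wirtABar f = fun y =>
      (1 / 2 : ℂ) * dirDeriv (1, 0) f y + ((1 / 2) * I) * dirDeriv (I, 0) f y := by
    funext y; simp only [wirtABar]; ring
  have hBeq : wirtB f = fun y =>
      (1 / 2 : ℂ) * dirDeriv (0, 1) f y + (-(1 / 2) * I) * dirDeriv (0, I) f y := by
    funext y; simp only [wirtB]; ring
  have hBBeq : wirtBBar f = fun y =>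
      (1 / 2 : ℂ) * dirDeriv (0, 1) f y + ((1 / 2) * I) * dirDeriv (0, I) f y := by
    funext y; simp only [wirtBBar]; ring
  have hA : ContDiff ℝ (⊤ : ℕ∞) (wirtA f) := by
    rw [hAeq]; exact (contDiff_const.mul (hDf _)).add (contDiff_const.mul (hDf _))
  have hAB : ContDiff ℝ (⊤ : ℕ∞) (wirtABar f) := by
    rw [hABeq]; exact (contDiff_const.mul (hDf _)).add (contDiff_const.mul (hDf _))
  have hB : ContDiff ℝ (⊤ : ℕ∞) (wirtB f) := by
    rw [hBeq]; exact (contDiff_const.mul (hDf _)).add (contDiff_const.mul (hDf _))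
  have hBB : ContDiff ℝ (⊤ : ℕ∞) (wirtBBar f) := by
    rw [hBBeq]; exact (contDiff_const.mul (hDf _)).add (contDiff_const.mul (hDf _))
  -- the Wirtinger derivatives of a harmonic function are harmonic
  have hlapA : ∀ x, laplacian (wirtA f) x = 0 := by
    intro x; rw [hAeq, lap_combo _ _ (hDf _) (hDf _), hlapD, hlapD]; ring
  have hlapAB : ∀ x, laplacian (wirtABar f) x = 0 := by
    intro x; rw [hABeq, lap_combo _ _ (hDf _) (hDf _), hlapD, hlapD]; ring
  have hlapB : ∀ x, laplacian (wirtB f) x = 0 := by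
    intro x; rw [hBeq, lap_combo _ _ (hDf _) (hDf _), hlapD, hlapD]; ring
  have hlapBB : ∀ x, laplacian (wirtBBar f) x = 0 := by
    intro x; rw [hBBeq, lap_combo _ _ (hDf _) (hDf _), hlapD, hlapD]; ring
  -- directional derivatives of the Wirtinger derivatives
  have hDA : ∀ (v x : ℂ × ℂ), dirDeriv v (wirtA f) x
      = (1 / 2 : ℂ) * dirDeriv v (dirDeriv (1, 0) f) x
        + (-(1 / 2) * I) * dirDeriv v (dirDeriv (I, 0) f) x := by
    intro v x; rw [hAeq]; exact dirDeriv_combo_pt _ _ (hDfd _ x) (hDfd _ x)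
  have hDAB : ∀ (v x : ℂ × ℂ), dirDeriv v (wirtABar f) x
      = (1 / 2 : ℂ) * dirDeriv v (dirDeriv (1, 0) f) x
        + ((1 / 2) * I) * dirDeriv v (dirDeriv (I, 0) f) x := by
    intro v x; rw [hABeq]; exact dirDeriv_combo_pt _ _ (hDfd _ x) (hDfd _ x)
  have hDB : ∀ (v x : ℂ × ℂ), dirDeriv v (wirtB f) x
      = (1 / 2 : ℂ) * dirDeriv v (dirDeriv (0, 1) f) x
        + (-(1 / 2) * I) * dirDeriv v (dirDeriv (0, I) f) x := by
    intro v x; rw [hBeq]; exact dirDeriv_combo_pt _ _ (hDfd _ x) (hDfd _ x)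
  have hDBB : ∀ (v x : ℂ × ℂ), dirDeriv v (wirtBBar f) x
      = (1 / 2 : ℂ) * dirDeriv v (dirDeriv (0, 1) f) x
        + ((1 / 2) * I) * dirDeriv v (dirDeriv (0, I) f) x := by
    intro v x; rw [hBBeq]; exact dirDeriv_combo_pt _ _ (hDfd _ x) (hDfd _ x)
  constructor
  · -- twist₋
    intro x
    set c1 : (ℂ × ℂ) →L[ℝ] ℂ :=
      -(Complex.conjCLE.toContinuousLinearMap.comp (ContinuousLinearMap.snd ℝ ℂ ℂ)) with hc1
    set c2 : (ℂ × ℂ) →L[ℝ] ℂ :=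
      Complex.conjCLE.toContinuousLinearMap.comp (ContinuousLinearMap.fst ℝ ℂ ℂ) with hc2
    have hc1v : ∀ y : ℂ × ℂ, c1 y = -(starRingEnd ℂ) y.2 := by
      intro y; simp [hc1]
    have hc2v : ∀ y : ℂ × ℂ, c2 y = (starRingEnd ℂ) y.1 := by
      intro y; simp [hc2]
    have htm : twistMinus f = fun y => c1 y * wirtA f y + c2 y * wirtB f y := by
      funext y; simp only [twistMinus, hc1v, hc2v]
    rw [htm, lap_add (c1.contDiff.mul hA) (c2.contDiff.mul hB) x,
      lap_clm_mul c1 hA x, lap_clm_mul c2 hB x, hlapA, hlapB]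
    simp only [hc1v, hc2v]
    rw [hDA (0, 1) x, hDA (0, I) x, hDB (1, 0) x, hDB (I, 0) x,
      hDA (1, 0) x, hDA (I, 0) x, hDB (0, 1) x, hDB (0, I) x,
      dirDeriv_comm hf (0, 1) (1, 0) x, dirDeriv_comm hf (0, 1) (I, 0) x,
      dirDeriv_comm hf (0, I) (1, 0) x, dirDeriv_comm hf (0, I) (I, 0) x]
    simp only [map_zero, map_one, Complex.conj_I]
    ring_nf
  · -- twist₊
    intro x
    set c1 : (ℂ × ℂ) →L[ℝ] ℂ := -(ContinuousLinearMap.snd ℝ ℂ ℂ) with hc1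
    set c2 : (ℂ × ℂ) →L[ℝ] ℂ := ContinuousLinearMap.fst ℝ ℂ ℂ with hc2
    have hc1v : ∀ y : ℂ × ℂ, c1 y = -y.2 := by intro y; simp [hc1]
    have hc2v : ∀ y : ℂ × ℂ, c2 y = y.1 := by intro y; simp [hc2]
    have htp : twistPlus f = fun y => c1 y * wirtABar f y + c2 y * wirtBBar f y := by
      funext y; simp only [twistPlus, hc1v, hc2v]
    rw [htp, lap_add (c1.contDiff.mul hAB) (c2.contDiff.mul hBB) x,
      lap_clm_mul c1 hAB x, lap_clm_mul c2 hBB x, hlapAB, hlapBB]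
    simp only [hc1v, hc2v]
    rw [hDAB (0, 1) x, hDAB (0, I) x, hDBB (1, 0) x, hDBB (I, 0) x,
      hDAB (1, 0) x, hDAB (I, 0) x, hDBB (0, 1) x, hDBB (0, I) x,
      dirDeriv_comm hf (0, 1) (1, 0) x, dirDeriv_comm hf (0, 1) (I, 0) x,
      dirDeriv_comm hf (0, I) (1, 0) x, dirDeriv_comm hf (0, I) (I, 0) x]
    ring_nf
end

section
/- There exist nonzero complex numbers a, b, c such that a·I₁₂⁵ + b·I₂₀³ + c·I₃₀² = 0 as polynomials in ℂ[α, β]; that is, the three degree-60 invariants I₁₂⁵, I₂₀³ and I₃₀² are linearly dependent, and indeed each two of them span the same 2-dimensional space as all three. -/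
open MvPolynomial

/-- The Klein icosahedral form `I₁₂ = α¹¹β + 11α⁶β⁶ − αβ¹¹` (vertices). -/
noncomputable def kleinI12 : MvPolynomial (Fin 2) ℂ :=
  (X 0) ^ 11 * X 1 + 11 * (X 0) ^ 6 * (X 1) ^ 6 - X 0 * (X 1) ^ 11

/-- The Klein icosahedral form `I₂₀ = α²⁰ − 228α¹⁵β⁵ + 494α¹⁰β¹⁰ + 228α⁵β¹⁵ + β²⁰`
(face centers). -/
noncomputable def kleinI20 : MvPolynomial (Fin 2) ℂ :=
  (X 0) ^ 20 - 228 * (X 0) ^ 15 * (X 1) ^ 5 + 494 * (X 0) ^ 10 * (X 1) ^ 10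
    + 228 * (X 0) ^ 5 * (X 1) ^ 15 + (X 1) ^ 20

/-- The Klein icosahedral form
`I₃₀ = α³⁰ + 522α²⁵β⁵ − 10005α²⁰β¹⁰ − 10005α¹⁰β²⁰ − 522α⁵β²⁵ + β³⁰` (edge midpoints). -/
noncomputable def kleinI30 : MvPolynomial (Fin 2) ℂ :=
  (X 0) ^ 30 + 522 * (X 0) ^ 25 * (X 1) ^ 5 - 10005 * (X 0) ^ 20 * (X 1) ^ 10
    - 10005 * (X 0) ^ 10 * (X 1) ^ 20 - 522 * (X 0) ^ 5 * (X 1) ^ 25 + (X 1) ^ 30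

lemma klein_rel : kleinI30 ^ 2 = (1728 : ℂ) • kleinI12 ^ 5 + kleinI20 ^ 3 := by
  simp only [smul_eq_C_mul, map_ofNat]
  unfold kleinI12 kleinI20 kleinI30
  ring

lemma klein_eval10_I12 : eval ![(1:ℂ), 0] kleinI12 = 0 := by
  simp [kleinI12]

lemma klein_eval10_I20 : eval ![(1:ℂ), 0] kleinI20 = 1 := by
  simp [kleinI20]

lemma klein_eval11_I12 : eval ![(1:ℂ), 1] kleinI12 = 11 := by
  simp [kleinI12]

lemma klein_indep : LinearIndependent ℂ ![kleinI12 ^ 5, kleinI20 ^ 3] := by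
  rw [LinearIndependent.pair_iff]
  intro s t h
  have h0 := congrArg (eval ![(1:ℂ), 0]) h
  simp only [smul_eq_C_mul, map_add, map_mul, map_pow, eval_C, map_zero,
    klein_eval10_I12, klein_eval10_I20] at h0
  norm_num at h0
  subst h0
  have h1 := congrArg (eval ![(1:ℂ), 1]) h
  simp only [smul_eq_C_mul, map_add, map_mul, map_pow, eval_C, map_zero,
    klein_eval11_I12] at h1
  norm_num at h1
  exact ⟨h1, rfl⟩

/-- There exist nonzero complex numbers `a, b, c` such that
`a·I₁₂⁵ + b·I₂₀³ + c·I₃₀² = 0` in `ℂ[α, β]`: the three degree-60 invariants are linearly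
dependent, and each two of them span the same 2-dimensional space as all three. -/
theorem klein_degree60_dependence :
    (∃ a b c : ℂ, a ≠ 0 ∧ b ≠ 0 ∧ c ≠ 0 ∧
        a • kleinI12 ^ 5 + b • kleinI20 ^ 3 + c • kleinI30 ^ 2 = 0) ∧
    Submodule.span ℂ {kleinI12 ^ 5, kleinI20 ^ 3}
      = Submodule.span ℂ {kleinI12 ^ 5, kleinI20 ^ 3, kleinI30 ^ 2} ∧
    Submodule.span ℂ {kleinI12 ^ 5, kleinI30 ^ 2}
      = Submodule.span ℂ {kleinI12 ^ 5, kleinI20 ^ 3, kleinI30 ^ 2} ∧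
    Submodule.span ℂ {kleinI20 ^ 3, kleinI30 ^ 2}
      = Submodule.span ℂ {kleinI12 ^ 5, kleinI20 ^ 3, kleinI30 ^ 2} ∧
    Module.finrank ℂ
        (Submodule.span ℂ ({kleinI12 ^ 5, kleinI20 ^ 3, kleinI30 ^ 2} :
          Set (MvPolynomial (Fin 2) ℂ))) = 2 := by
  set A := kleinI12 ^ 5 with hA
  set B := kleinI20 ^ 3 with hB
  set C := kleinI30 ^ 2 with hC
  have hCmem : C ∈ Submodule.span ℂ ({A, B} : Set (MvPolynomial (Fin 2) ℂ)) := by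
    rw [hC, klein_rel]
    exact Submodule.add_mem _
      (Submodule.smul_mem _ _ (Submodule.subset_span (by simp [A, B])))
      (Submodule.subset_span (by simp [A, B]))
  have hBeq : B = C - (1728 : ℂ) • A := by rw [hC, klein_rel]; abel
  have hAeq : A = (1728 : ℂ)⁻¹ • C - (1728 : ℂ)⁻¹ • B := by
    rw [hC, klein_rel, smul_add, smul_smul]
    norm_num [A, B]
  have hBmem : B ∈ Submodule.span ℂ ({A, C} : Set (MvPolynomial (Fin 2) ℂ)) := by
    rw [hBeq]
    exact Submodule.sub_mem _ (Submodule.subset_span (by simp))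
      (Submodule.smul_mem _ _ (Submodule.subset_span (by simp)))
  have hAmem : A ∈ Submodule.span ℂ ({B, C} : Set (MvPolynomial (Fin 2) ℂ)) := by
    rw [hAeq]
    exact Submodule.sub_mem _
      (Submodule.smul_mem _ _ (Submodule.subset_span (by simp)))
      (Submodule.smul_mem _ _ (Submodule.subset_span (by simp)))
  have span1 : Submodule.span ℂ ({A, B} : Set (MvPolynomial (Fin 2) ℂ))
      = Submodule.span ℂ {A, B, C} := by
    apply le_antisymm
    · exact Submodule.span_mono (Set.insert_subset_insert (Set.singleton_subset_iff.mpr (Set.mem_insert _ _)))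
    · rw [Submodule.span_le]
      rintro x (rfl | rfl | rfl)
      · exact Submodule.subset_span (by simp)
      · exact Submodule.subset_span (by simp)
      · exact hCmem
  have span2 : Submodule.span ℂ ({A, C} : Set (MvPolynomial (Fin 2) ℂ))
      = Submodule.span ℂ {A, B, C} := by
    apply le_antisymm
    · exact Submodule.span_mono (Set.insert_subset_insert (Set.singleton_subset_iff.mpr (Set.mem_insert_of_mem _ (Set.mem_singleton _))))
    · rw [Submodule.span_le]
      rintro x (rfl | rfl | rfl)
      · exact Submodule.subset_span (by simp)
      · exact hBmem
      · exact Submodule.subset_span (by simp)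
  have span3 : Submodule.span ℂ ({B, C} : Set (MvPolynomial (Fin 2) ℂ))
      = Submodule.span ℂ {A, B, C} := by
    apply le_antisymm
    · exact Submodule.span_mono (Set.subset_insert _ _)
    · rw [Submodule.span_le]
      rintro x (rfl | rfl | rfl)
      · exact hAmem
      · exact Submodule.subset_span (by simp)
      · exact Submodule.subset_span (by simp)
  refine ⟨⟨1728, 1, -1, by norm_num, one_ne_zero, by norm_num, ?_⟩,
    span1, span2, span3, ?_⟩
  · rw [hC, klein_rel, hA, hB]
    module
  · rw [← span1]
    have hrange : Set.range ![A, B] = ({A, B} : Set (MvPolynomial (Fin 2) ℂ)) := by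
      ext x
      simp only [Set.mem_range, Fin.exists_fin_two, Matrix.cons_val_zero,
        Matrix.cons_val_one, Matrix.head_cons, Set.mem_insert_iff, Set.mem_singleton_iff]
      exact or_congr eq_comm eq_comm
    have := finrank_span_eq_card klein_indep
    rewrite [hrange] at this
    simpa using this
end

section
/- Fix natural numbers k̃, r₅, r₃, r₂. Then the k̃ + 1 polynomials P_i = I₁₂^{5i + r₅} · I₂₀^{3(k̃ − i) + r₃} · I₃₀^{r₂} ∈ ℂ[α, β], for i = 0, 1, …, k̃, are linearly independent over ℂ. (These are the base modes of the Poincaré dodecahedral space S³/I* for wavenumber k = 2(30k̃ + 6r₅ + 10r₃ + 15r₂); their independence follows because α occurs with maximal degree 55 in I₁₂⁵ but maximal degree 60 in I₂₀³, so the P_i have distinct leading α-degrees.) -/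
open MvPolynomial

open Polynomial in
/-- Nonzero one-variable polynomials with pairwise distinct natural degrees are
linearly independent. -/
theorem linearIndependent_of_natDegree_injective {ι : Type*} (q : ι → Polynomial ℂ)
    (hq : ∀ i, q i ≠ 0) (hd : Function.Injective (fun i => (q i).natDegree)) :
    LinearIndependent ℂ q := by
  rw [linearIndependent_iff']
  intro s g hsum
  by_contra hcon
  push_neg at hcon
  obtain ⟨i₀, hi₀s, hi₀⟩ := hcon
  have ht : (s.filter (fun j => g j ≠ 0)).Nonempty := ⟨i₀, Finset.mem_filter.2 ⟨hi₀s, hi₀⟩⟩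
  obtain ⟨i, hi, hmax⟩ := Finset.exists_max_image _ (fun j => (q j).natDegree) ht
  rw [Finset.mem_filter] at hi
  have hcoeff := congrArg (fun p => Polynomial.coeff p (q i).natDegree) hsum
  simp only [Polynomial.finset_sum_coeff, Polynomial.coeff_smul, Polynomial.coeff_zero,
    smul_eq_mul] at hcoeff
  rw [Finset.sum_eq_single i] at hcoeff
  · have hlc : (q i).coeff (q i).natDegree ≠ 0 := Polynomial.leadingCoeff_ne_zero.2 (hq i)
    rcases mul_eq_zero.mp hcoeff with h | h
    · exact hi.2 h
    · exact hlc h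
  · intro j hjs hji
    by_cases hgj : g j = 0
    · simp [hgj]
    · have hjle := hmax j (Finset.mem_filter.2 ⟨hjs, hgj⟩)
      have hjne : (q j).natDegree ≠ (q i).natDegree := fun h => hji (hd h)
      rw [Polynomial.coeff_eq_zero_of_natDegree_lt (lt_of_le_of_ne hjle hjne), mul_zero]
  · intro h; exact absurd hi.1 h

noncomputable def evalBeta1 : MvPolynomial (Fin 2) ℂ →ₐ[ℂ] Polynomial ℂ :=
  aeval ![Polynomial.X, 1]

noncomputable def polyA : Polynomial ℂ := Polynomial.X ^ 11 + 11 * Polynomial.X ^ 6 - Polynomial.X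
noncomputable def polyB : Polynomial ℂ :=
  Polynomial.X ^ 20 - 228 * Polynomial.X ^ 15 + 494 * Polynomial.X ^ 10
    + 228 * Polynomial.X ^ 5 + 1
noncomputable def polyC : Polynomial ℂ :=
  Polynomial.X ^ 30 + 522 * Polynomial.X ^ 25 - 10005 * Polynomial.X ^ 20
    - 10005 * Polynomial.X ^ 10 - 522 * Polynomial.X ^ 5 + 1

theorem evalBeta1_I12 : evalBeta1 kleinI12 = polyA := by
  simp [evalBeta1, kleinI12, polyA]

theorem evalBeta1_I20 : evalBeta1 kleinI20 = polyB := by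
  simp [evalBeta1, kleinI20, polyB]

theorem evalBeta1_I30 : evalBeta1 kleinI30 = polyC := by
  simp [evalBeta1, kleinI30, polyC]

theorem polyA_monic : polyA.Monic := by unfold polyA; monicity!
theorem polyB_monic : polyB.Monic := by unfold polyB; monicity!
theorem polyC_monic : polyC.Monic := by unfold polyC; monicity!

theorem polyA_deg : polyA.natDegree = 11 := by unfold polyA; compute_degree!
theorem polyB_deg : polyB.natDegree = 20 := by unfold polyB; compute_degree!
theorem polyC_deg : polyC.natDegree = 30 := by unfold polyC; compute_degree!

/-- For fixed natural numbers `k̃, r₅, r₃, r₂`, the `k̃ + 1` polynomials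
`Pᵢ = I₁₂^{5i + r₅} · I₂₀^{3(k̃ − i) + r₃} · I₃₀^{r₂}`, `i = 0, …, k̃`, are linearly
independent over `ℂ`.  These are the base modes of the Poincaré dodecahedral space `S³/I*`
for wavenumber `k = 2(30k̃ + 6r₅ + 10r₃ + 15r₂)`. -/
theorem dodecahedral_base_modes_linearIndependent (ktilde r5 r3 r2 : ℕ) :
    LinearIndependent ℂ (fun i : Fin (ktilde + 1) =>
      kleinI12 ^ (5 * (i : ℕ) + r5) * kleinI20 ^ (3 * (ktilde - (i : ℕ)) + r3)
        * kleinI30 ^ r2) := by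
  apply LinearIndependent.of_comp evalBeta1.toLinearMap
  have himg : (evalBeta1.toLinearMap ∘ fun i : Fin (ktilde + 1) =>
      kleinI12 ^ (5 * (i : ℕ) + r5) * kleinI20 ^ (3 * (ktilde - (i : ℕ)) + r3)
        * kleinI30 ^ r2) = fun i : Fin (ktilde + 1) =>
      polyA ^ (5 * (i : ℕ) + r5) * polyB ^ (3 * (ktilde - (i : ℕ)) + r3) * polyC ^ r2 := by
    funext i
    simp [map_mul, map_pow, evalBeta1_I12, evalBeta1_I20, evalBeta1_I30]
  rw [himg]
  have hmon : ∀ i : Fin (ktilde + 1),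
      (polyA ^ (5 * (i : ℕ) + r5) * polyB ^ (3 * (ktilde - (i : ℕ)) + r3) * polyC ^ r2).Monic :=
    fun i => ((polyA_monic.pow _).mul (polyB_monic.pow _)).mul (polyC_monic.pow _)
  have hdeg : ∀ i : Fin (ktilde + 1),
      (polyA ^ (5 * (i : ℕ) + r5) * polyB ^ (3 * (ktilde - (i : ℕ)) + r3)
        * polyC ^ r2).natDegree
      = 11 * (5 * (i : ℕ) + r5) + 20 * (3 * (ktilde - (i : ℕ)) + r3) + 30 * r2 := by
    intro i
    rw [((polyA_monic.pow _).mul (polyB_monic.pow _)).natDegree_mul (polyC_monic.pow _),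
      (polyA_monic.pow _).natDegree_mul (polyB_monic.pow _),
      polyA_monic.natDegree_pow, polyB_monic.natDegree_pow, polyC_monic.natDegree_pow,
      polyA_deg, polyB_deg, polyC_deg]
    ring
  apply linearIndependent_of_natDegree_injective
  · exact fun i => (hmon i).ne_zero
  · intro i j hij
    simp only [hdeg] at hij
    have hi := i.isLt; have hj := j.isLt
    have : (i : ℕ) = (j : ℕ) := by omega
    exact Fin.ext this
end

section
/- For every natural number n, the number of triples (a, b, c) of natural numbers with 6a + 10b + 15c = n and c ≤ 1 equals max(0, ⌊n/2⌋ + ⌊n/3⌋ + ⌊n/5⌋ − n + 1), where the floors denote integer division and the expression is evaluated in ℤ. (This count is the number of base modes of the Poincaré dodecahedral space S³/I* for wavenumber k = 2n; in the paper's notation it equals k̃ + 1 with k̃ = ⌊n/2⌋ + ⌊n/3⌋ + ⌊n/5⌋ − n, and there are no base modes exactly when k̃ = −1.) -/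
private def Fset (n : ℕ) : Finset (ℕ × ℕ × ℕ) :=
  (Finset.range 7 ×ˢ Finset.range 4 ×ˢ Finset.range 2).filter
    fun t => 6 * t.1 + 10 * t.2.1 + 15 * t.2.2 = n ∧ t.2.2 ≤ 1

private lemma sols_finite (n : ℕ) :
    {t : ℕ × ℕ × ℕ | 6 * t.1 + 10 * t.2.1 + 15 * t.2.2 = n ∧ t.2.2 ≤ 1}.Finite := by
  apply Set.Finite.subset
    ((Finset.range (n+1) ×ˢ Finset.range (n+1) ×ˢ Finset.range 2) : Finset (ℕ×ℕ×ℕ)).finite_toSet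
  rintro ⟨a, b, c⟩ ⟨h1, h2⟩
  simp only [Finset.coe_product, Set.mem_prod, Finset.mem_coe, Finset.mem_range]
  dsimp only at h1 h2 ⊢
  omega

private lemma base_case (n : ℕ) (h : n < 39) :
    {t : ℕ × ℕ × ℕ | 6 * t.1 + 10 * t.2.1 + 15 * t.2.2 = n ∧ t.2.2 ≤ 1}.ncard
      = (Fset n).card := by
  rw [← Set.ncard_coe_finset]
  congr 1
  ext ⟨a, b, c⟩
  simp only [Set.mem_setOf_eq, Finset.coe_filter, Fset, Finset.mem_product, Finset.mem_range]
  constructor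
  · rintro ⟨h1, h2⟩; exact ⟨⟨by omega, by omega, by omega⟩, h1, h2⟩
  · rintro ⟨_, h1, h2⟩; exact ⟨h1, h2⟩

private lemma step_case (n : ℕ) (hn : 9 ≤ n) :
    {t : ℕ × ℕ × ℕ | 6 * t.1 + 10 * t.2.1 + 15 * t.2.2 = n + 30 ∧ t.2.2 ≤ 1}.ncard
      = {t : ℕ × ℕ × ℕ | 6 * t.1 + 10 * t.2.1 + 15 * t.2.2 = n ∧ t.2.2 ≤ 1}.ncard + 1 := by
  have hsplit : {t : ℕ × ℕ × ℕ | 6 * t.1 + 10 * t.2.1 + 15 * t.2.2 = n + 30 ∧ t.2.2 ≤ 1}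
      = ((fun t : ℕ × ℕ × ℕ => (t.1 + 5, t.2)) ''
          {t : ℕ × ℕ × ℕ | 6 * t.1 + 10 * t.2.1 + 15 * t.2.2 = n ∧ t.2.2 ≤ 1})
        ∪ {(n % 5, (n + 30 - 15 * (n % 2) - 6 * (n % 5)) / 10, n % 2)} := by
    ext ⟨a, b, c⟩
    simp only [Set.mem_union, Set.mem_image, Set.mem_setOf_eq, Set.mem_singleton_iff,
      Prod.mk.injEq, Prod.ext_iff]
    constructor
    · rintro ⟨h1, h2⟩
      by_cases h : 5 ≤ a
      · exact Or.inl ⟨(a - 5, b, c), ⟨by dsimp only; omega, by dsimp only; omega⟩,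
          by dsimp only; omega, rfl, rfl⟩
      · have ha : a = n % 5 := by omega
        have hc : c = n % 2 := by omega
        exact Or.inr ⟨ha, by rw [← ha, ← hc]; omega, hc⟩
    · rintro (⟨⟨x, y, z⟩, ⟨h1, h2⟩, h3, h4, h5⟩ | h)
      · dsimp only at h1 h2 h3 h4 h5
        subst h4 h5
        constructor <;> omega
      · omega
  have hinj : Function.Injective (fun t : ℕ × ℕ × ℕ => (t.1 + 5, t.2)) := by
    rintro ⟨a, b⟩ ⟨c, d⟩ h
    simp only [Prod.mk.injEq] at h ⊢
    exact ⟨by omega, h.2⟩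
  have hdisj : Disjoint
      ((fun t : ℕ × ℕ × ℕ => (t.1 + 5, t.2)) ''
        {t : ℕ × ℕ × ℕ | 6 * t.1 + 10 * t.2.1 + 15 * t.2.2 = n ∧ t.2.2 ≤ 1})
      {((n % 5 : ℕ), (n + 30 - 15 * (n % 2) - 6 * (n % 5)) / 10, n % 2)} := by
    rw [Set.disjoint_singleton_right]
    rintro ⟨⟨x, y, z⟩, -, h⟩
    simp only [Prod.mk.injEq] at h
    omega
  rw [hsplit, Set.ncard_union_eq hdisj ((sols_finite n).image _) (Set.finite_singleton _),
    Set.ncard_image_of_injective _ hinj, Set.ncard_singleton]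

/-- For every natural number `n`, the number of triples `(a, b, c)` of
natural numbers with `6a + 10b + 15c = n` and `c ≤ 1` equals
`max 0 (⌊n/2⌋ + ⌊n/3⌋ + ⌊n/5⌋ − n + 1)`, evaluated in `ℤ` (floors are natural division).
This counts the base modes of the Poincaré dodecahedral space `S³/I*` for wavenumber `k = 2n`. -/
theorem dodecahedral_base_mode_count (n : ℕ) :
    (({t : ℕ × ℕ × ℕ | 6 * t.1 + 10 * t.2.1 + 15 * t.2.2 = n ∧ t.2.2 ≤ 1}).ncard : ℤ)
      = max 0 (((n / 2 : ℕ) : ℤ) + ((n / 3 : ℕ) : ℤ) + ((n / 5 : ℕ) : ℤ) - (n : ℤ) + 1) := by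
  induction n using Nat.strong_induction_on with
  | _ n ih =>
    rcases lt_or_ge n 39 with h | h
    · rw [base_case n h]
      interval_cases n <;> decide
    · obtain ⟨m, rfl⟩ : ∃ m, n = m + 30 := ⟨n - 30, by omega⟩
      rw [step_case m (by omega)]
      have ihm := ih m (by omega)
      have e2 : ((m + 30) / 2 : ℕ) = m / 2 + 15 := by omega
      have e3 : ((m + 30) / 3 : ℕ) = m / 3 + 10 := by omega
      have e5 : ((m + 30) / 5 : ℕ) = m / 5 + 6 := by omega
      have hx : m ≤ m / 2 + m / 3 + m / 5 + 2 := by omega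
      rw [e2, e3, e5]
      push_cast at ihm ⊢
      omega
end

section
/- For every natural number n, the number of triples (a, b, c) of natural numbers with 4a + 6b + 9c = n and c ≤ 1 equals max(0, ⌊n/2⌋ + ⌊n/3⌋ + ⌊n/4⌋ − n + 1), where the floors denote integer division and the expression is evaluated in ℤ. (This count is the number of base modes of the binary octahedral space S³/O* for wavenumber k = 2n.) -/
open Finset

private def F (n : ℕ) : Finset (ℕ × ℕ × ℕ) :=
  ((range (n+1)) ×ˢ (range (n+1)) ×ˢ (range 2)).filter
    (fun t => 4 * t.1 + 6 * t.2.1 + 9 * t.2.2 = n ∧ t.2.2 ≤ 1)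

private lemma mem_F {n : ℕ} {t : ℕ × ℕ × ℕ} :
    t ∈ F n ↔ 4 * t.1 + 6 * t.2.1 + 9 * t.2.2 = n ∧ t.2.2 ≤ 1 := by
  obtain ⟨a, b, c⟩ := t
  simp only [F, mem_filter, mem_product, mem_range]
  omega

private lemma step_aux (m a0 b0 c0 : ℕ) (hb0 : b0 < 2) (hc0 : c0 ≤ 1)
    (heq : 4*a0 + 6*b0 + 9*c0 = m + 12) :
    (F (m+12)).card = (F m).card + 1 := by
  have he : (a0, b0, c0) ∈ F (m+12) := mem_F.2 ⟨heq, hc0⟩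
  have hcard : ((F (m+12)).erase (a0,b0,c0)).card = (F m).card := by
    have hi : ∀ t ∈ (F (m+12)).erase (a0,b0,c0),
        (t.1, t.2.1 - 2, t.2.2) ∈ F m := by
      rintro ⟨a, b, c⟩ ht
      rw [Finset.mem_erase, mem_F] at ht
      rw [mem_F]
      obtain ⟨hne, ht⟩ := ht
      simp only [Prod.mk.injEq, not_and, ne_eq] at hne ⊢
      simp only at ht ⊢
      omega
    have hj : ∀ t ∈ F m,
        (t.1, t.2.1 + 2, t.2.2) ∈ (F (m+12)).erase (a0,b0,c0) := by
      rintro ⟨a, b, c⟩ ht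
      rw [mem_F] at ht
      rw [Finset.mem_erase, mem_F]
      simp only [Prod.mk.injEq, ne_eq, not_and] at *
      omega
    refine Finset.card_nbij' (fun t => (t.1, t.2.1 - 2, t.2.2))
      (fun t => (t.1, t.2.1 + 2, t.2.2)) hi hj ?_ ?_
    · rintro ⟨a, b, c⟩ ht
      rw [Finset.mem_coe, Finset.mem_erase, mem_F] at ht
      obtain ⟨hne, ht⟩ := ht
      simp only [Prod.mk.injEq, ne_eq, true_and, and_true, eq_self_iff_true] at hne ht ⊢
      omega
    · rintro ⟨a, b, c⟩ ht
      simp only [Prod.mk.injEq, true_and, and_true, eq_self_iff_true]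
      omega
  have := Finset.card_erase_add_one he
  omega

private lemma step (m : ℕ) : (F (m+12)).card = (F m).card + 1 := by
  have h4 : m % 4 = 0 ∨ m % 4 = 1 ∨ m % 4 = 2 ∨ m % 4 = 3 := by omega
  rcases h4 with h | h | h | h
  · exact step_aux m ((m+12)/4) 0 0 (by omega) (by omega) (by omega)
  · exact step_aux m ((m+3)/4) 0 1 (by omega) (by omega) (by omega)
  · exact step_aux m ((m+6)/4) 1 0 (by omega) (by omega) (by omega)
  · exact step_aux m ((m-3)/4) 1 1 (by omega) (by omega) (by omega)

private lemma card_F (n : ℕ) :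
    ((F n).card : ℤ) = ((n / 2 : ℕ) : ℤ) + ((n / 3 : ℕ) : ℤ) + ((n / 4 : ℕ) : ℤ) - (n : ℤ) + 1 := by
  induction n using Nat.strong_induction_on with
  | _ n ih =>
    rcases lt_or_ge n 12 with h | h
    · interval_cases n <;> decide
    · obtain ⟨m, rfl⟩ : ∃ m, n = m + 12 := ⟨n - 12, by omega⟩
      have h1 := ih m (by omega)
      have h2 := step m
      omega

/-- For every natural number `n`, the number of triples `(a, b, c)` of
natural numbers with `4a + 6b + 9c = n` and `c ≤ 1` equals
`max 0 (⌊n/2⌋ + ⌊n/3⌋ + ⌊n/4⌋ − n + 1)`, evaluated in `ℤ` (floors are natural division).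
This counts the base modes of the binary octahedral space `S³/O*` for wavenumber `k = 2n`. -/
theorem octahedral_base_mode_count (n : ℕ) :
    (({t : ℕ × ℕ × ℕ | 4 * t.1 + 6 * t.2.1 + 9 * t.2.2 = n ∧ t.2.2 ≤ 1}).ncard : ℤ)
      = max 0 (((n / 2 : ℕ) : ℤ) + ((n / 3 : ℕ) : ℤ) + ((n / 4 : ℕ) : ℤ) - (n : ℤ) + 1) := by
  have hset : {t : ℕ × ℕ × ℕ | 4 * t.1 + 6 * t.2.1 + 9 * t.2.2 = n ∧ t.2.2 ≤ 1} = ↑(F n) := by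
    ext t
    simp only [Set.mem_setOf_eq, Finset.coe_filter, mem_coe, mem_F]
  rw [hset, Set.ncard_coe_finset, card_F n]
  have h0 : (0 : ℤ) ≤ ((n / 2 : ℕ) : ℤ) + ((n / 3 : ℕ) : ℤ) + ((n / 4 : ℕ) : ℤ) - (n : ℤ) + 1 :=
    card_F n ▸ Int.natCast_nonneg _
  exact (max_eq_right h0).symm
end

section
/- For every natural number n, the number of triples (a, b, c) of natural numbers with 3a + 4b + 6c = n and b ≤ 2 equals max(0, ⌊n/2⌋ + ⌊n/3⌋ + ⌊n/3⌋ − n + 1), where the floors denote integer division and the expression is evaluated in ℤ. (This count is the number of base modes of the binary tetrahedral space S³/T* for wavenumber k = 2n.) -/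
/-- For every natural number `n`, the number of triples `(a, b, c)` of
natural numbers with `3a + 4b + 6c = n` and `b ≤ 2` equals
`max 0 (⌊n/2⌋ + ⌊n/3⌋ + ⌊n/3⌋ − n + 1)`, evaluated in `ℤ` (floors are natural division).
This counts the base modes of the binary tetrahedral space `S³/T*` for wavenumber `k = 2n`. -/
theorem tetrahedral_base_mode_count (n : ℕ) :
    (({t : ℕ × ℕ × ℕ | 3 * t.1 + 4 * t.2.1 + 6 * t.2.2 = n ∧ t.2.1 ≤ 2}).ncard : ℤ)
      = max 0 (((n / 2 : ℕ) : ℤ) + ((n / 3 : ℕ) : ℤ) + ((n / 3 : ℕ) : ℤ) - (n : ℤ) + 1) := by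
  by_cases h : 4 * (n % 3) ≤ n
  · obtain ⟨m, hm⟩ : ∃ m, 3 * m + 4 * (n % 3) = n := ⟨(n - 4 * (n % 3)) / 3, by omega⟩
    have hset : {t : ℕ × ℕ × ℕ | 3 * t.1 + 4 * t.2.1 + 6 * t.2.2 = n ∧ t.2.1 ≤ 2}
        = ↑((Finset.range (m / 2 + 1)).image (fun c => (m - 2 * c, n % 3, c))) := by
      ext ⟨a, b, c⟩
      simp only [Set.mem_setOf_eq, Finset.coe_image, Set.mem_image, Finset.mem_coe,
        Finset.mem_range, Prod.mk.injEq]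
      constructor
      · rintro ⟨heq, hb⟩
        have h3 : n % 3 = b % 3 := by rw [← heq]; omega
        exact ⟨c, by omega, by omega, by omega, rfl⟩
      · rintro ⟨c', hc', ha, hb, hc⟩
        subst hc
        omega
    rw [hset, Set.ncard_coe_finset, Finset.card_image_of_injective _ (fun x y hxy => by
      simpa using congrArg (fun p : ℕ × ℕ × ℕ => p.2.2) hxy), Finset.card_range]
    omega
  · have hset : {t : ℕ × ℕ × ℕ | 3 * t.1 + 4 * t.2.1 + 6 * t.2.2 = n ∧ t.2.1 ≤ 2} = ∅ := by
      ext ⟨a, b, c⟩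
      simp only [Set.mem_setOf_eq, Set.mem_empty_iff_false, iff_false, not_and]
      intro heq
      have h3 : n % 3 = b % 3 := by rw [← heq]; omega
      omega
    rw [hset, Set.ncard_empty]
    omega
end

section
/- Fix an integer m ≥ 1 and an even natural number k, and write h = k/2. Then the number of triples (a, b, c) with a, b natural numbers and c ∈ {0, 1} satisfying 4a + 2mb + (2m+2)c = k equals ⌊h/2⌋ + ⌊h/2⌋ + ⌊h/m⌋ − h + 1, where the floors denote integer division and the expression is evaluated in ℤ (it is always nonnegative). (This count is the number of base modes of the binary dihedral space S³/D_m* for wavenumber k, and multiplying by k + 1 gives the dimension of the eigenspace.) -/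
def bdSol (m h : ℕ) : Finset (ℕ × ℕ × ℕ) :=
  (Finset.range (h+1) ×ˢ Finset.range (h+1) ×ˢ Finset.range 2).filter
    (fun t => 2*t.1 + m*t.2.1 + m*t.2.2 + t.2.2 = h)

lemma mem_bdSol {m : ℕ} (hm : 1 ≤ m) {h a b c : ℕ} :
    (a, b, c) ∈ bdSol m h ↔ c ≤ 1 ∧ 2*a + m*b + m*c + c = h := by
  simp only [bdSol, Finset.mem_filter, Finset.mem_product, Finset.mem_range]
  have hb : b ≤ m*b := Nat.le_mul_of_pos_left b hm
  omega

def bdShift : ℕ × ℕ × ℕ → ℕ × ℕ × ℕ := fun t => (t.1 + 1, t.2)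

lemma bdShift_inj : Function.Injective bdShift := by
  rintro ⟨a, b, c⟩ ⟨a', b', c'⟩ hxy
  simp only [bdShift, Prod.mk.injEq] at hxy ⊢
  omega

lemma card_bdSol (m : ℕ) (hm : 1 ≤ m) : ∀ h, (bdSol m h).card = h / m + 1 - h % 2 := by
  intro h
  induction h using Nat.strong_induction_on with
  | _ h IH =>
  match h with
  | 0 =>
    have h0 : bdSol m 0 = {(0, 0, 0)} := by
      ext ⟨a, b, c⟩
      simp only [mem_bdSol hm, Finset.mem_singleton, Prod.mk.injEq]
      have hb : b ≤ m*b := Nat.le_mul_of_pos_left b hm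
      constructor
      · rintro ⟨hc, he⟩; omega
      · rintro ⟨rfl, rfl, rfl⟩; simp
    rw [h0]; simp
  | 1 =>
    by_cases hm1 : m = 1
    · subst hm1
      have h1 : bdSol 1 1 = {(0, 1, 0)} := by
        ext ⟨a, b, c⟩
        simp only [mem_bdSol (le_refl 1), Finset.mem_singleton, Prod.mk.injEq, one_mul]
        omega
      rw [h1]; simp
    · have h1 : bdSol m 1 = ∅ := by
        rw [Finset.eq_empty_iff_forall_notMem]
        rintro ⟨a, b, c⟩ ht
        rw [mem_bdSol hm] at ht
        obtain ⟨hc, he⟩ := ht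
        interval_cases c
        · have hb1 : m * b = 1 := by omega
          exact hm1 (Nat.dvd_one.mp ⟨b, hb1.symm⟩)
        · omega
      rw [h1]
      have : 1 / m = 0 := Nat.div_eq_of_lt (by omega)
      simp [this]
  | n + 2 =>
    have IHn := IH n (by omega)
    have hsplit : bdSol m (n+2) =
        (bdSol m n).image bdShift ∪ (bdSol m (n+2)).filter (fun t => t.1 = 0) := by
      ext ⟨a, b, c⟩
      constructor
      · intro ht
        obtain ⟨hc, heq⟩ := (mem_bdSol hm).mp ht
        rcases a with _ | a'
        · exact Finset.mem_union_right _ (Finset.mem_filter.mpr ⟨ht, rfl⟩)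
        · refine Finset.mem_union_left _ (Finset.mem_image.mpr ⟨(a', b, c), ?_, rfl⟩)
          exact (mem_bdSol hm).mpr ⟨hc, by omega⟩
      · intro ht
        rcases Finset.mem_union.mp ht with ht | ht
        · obtain ⟨⟨a', b', c'⟩, hs, hEq⟩ := Finset.mem_image.mp ht
          obtain ⟨hc, heq⟩ := (mem_bdSol hm).mp hs
          have h1 : a' + 1 = a ∧ b' = b ∧ c' = c := by
            simpa [bdShift, Prod.ext_iff] using hEq
          obtain ⟨h1, rfl, rfl⟩ := h1
          exact (mem_bdSol hm).mpr ⟨hc, by omega⟩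
        · exact (Finset.mem_filter.mp ht).1
    have hdisj : Disjoint ((bdSol m n).image bdShift)
        ((bdSol m (n+2)).filter (fun t => t.1 = 0)) := by
      rw [Finset.disjoint_left]
      rintro t ht htf
      simp only [Finset.mem_image] at ht
      simp only [Finset.mem_filter] at htf
      obtain ⟨s, _, rfl⟩ := ht
      exact Nat.succ_ne_zero _ htf.2
    have hcard := congrArg Finset.card hsplit
    rw [Finset.card_union_of_disjoint hdisj,
      Finset.card_image_of_injective _ bdShift_inj] at hcard
    have hs1 : (n+2) / m = (n+1) / m + if m ∣ (n+2) then 1 else 0 := Nat.succ_div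
    have hs2 : (n+1) / m = n / m + if m ∣ (n+1) then 1 else 0 := Nat.succ_div
    by_cases d1 : m ∣ (n+2) <;> by_cases d2 : m ∣ (n+1)
    · -- both divide: m = 1
      have hm1 : m = 1 := Nat.dvd_one.mp (by simpa using Nat.dvd_sub d1 d2)
      subst hm1
      have hR : (bdSol 1 (n+2)).filter (fun t => t.1 = 0) = {(0, n+2, 0), (0, n, 1)} := by
        ext ⟨a, b, c⟩
        simp only [Finset.mem_filter, mem_bdSol (le_refl 1), Finset.mem_insert,
          Finset.mem_singleton, Prod.mk.injEq, one_mul]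
        omega
      rw [hR] at hcard
      rw [Finset.card_insert_of_notMem (by simp), Finset.card_singleton] at hcard
      rw [if_pos d1] at hs1
      rw [if_pos d2] at hs2
      omega
    · -- only m ∣ n+2
      obtain ⟨q, hq⟩ := id d1
      have hR : (bdSol m (n+2)).filter (fun t => t.1 = 0) = {(0, q, 0)} := by
        ext ⟨a, b, c⟩
        simp only [Finset.mem_filter, mem_bdSol hm, Finset.mem_singleton, Prod.mk.injEq]
        constructor
        · rintro ⟨⟨hc, heq⟩, rfl⟩
          interval_cases c
          · have hbq : m * b = m * q := by omega
            exact ⟨rfl, Nat.eq_of_mul_eq_mul_left (by omega) hbq, rfl⟩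
          · exact absurd ⟨b + 1, by rw [Nat.mul_add, Nat.mul_one]; omega⟩ d2
        · rintro ⟨rfl, rfl, rfl⟩
          exact ⟨⟨by omega, by omega⟩, rfl⟩
      rw [hR, Finset.card_singleton] at hcard
      rw [if_pos d1] at hs1
      rw [if_neg d2] at hs2
      rw [hcard, IHn, hs1, hs2]
      generalize n / m = A
      omega
    · -- only m ∣ n+1
      obtain ⟨q, hq⟩ := id d2
      rcases q with _ | q'
      · omega
      rw [Nat.mul_succ] at hq
      have hR : (bdSol m (n+2)).filter (fun t => t.1 = 0) = {(0, q', 1)} := by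
        ext ⟨a, b, c⟩
        simp only [Finset.mem_filter, mem_bdSol hm, Finset.mem_singleton, Prod.mk.injEq]
        constructor
        · rintro ⟨⟨hc, heq⟩, rfl⟩
          interval_cases c
          · exact absurd ⟨b, by omega⟩ d1
          · have hbq : m * b = m * q' := by omega
            exact ⟨rfl, Nat.eq_of_mul_eq_mul_left (by omega) hbq, rfl⟩
        · rintro ⟨rfl, rfl, rfl⟩
          exact ⟨⟨by omega, by omega⟩, rfl⟩
      rw [hR, Finset.card_singleton] at hcard
      rw [if_neg d1] at hs1
      rw [if_pos d2] at hs2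
      rw [hcard, IHn, hs1, hs2]
      generalize n / m = A
      omega
    · -- neither divides
      have hR : (bdSol m (n+2)).filter (fun t => t.1 = 0) = ∅ := by
        rw [Finset.eq_empty_iff_forall_notMem]
        rintro ⟨a, b, c⟩ ht
        simp only [Finset.mem_filter, mem_bdSol hm] at ht
        obtain ⟨⟨hc, heq⟩, rfl⟩ := ht
        interval_cases c
        · exact d1 ⟨b, by omega⟩
        · exact d2 ⟨b + 1, by rw [Nat.mul_add, Nat.mul_one]; omega⟩
      rw [hR, Finset.card_empty] at hcard
      rw [if_neg d1] at hs1
      rw [if_neg d2] at hs2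
      omega

/-- For an integer `m ≥ 1` and an even natural number `k`, with `h = k/2`,
the number of triples `(a, b, c)` with `a, b ∈ ℕ`, `c ∈ {0,1}` and `4a + 2mb + (2m+2)c = k`
equals `⌊h/2⌋ + ⌊h/2⌋ + ⌊h/m⌋ − h + 1` (evaluated in `ℤ`; floors are natural division).
This counts the base modes of the binary dihedral space `S³/Dₘ*` for wavenumber `k`. -/
theorem binary_dihedral_base_mode_count (m : ℕ) (hm : 1 ≤ m) (k : ℕ) (hk : Even k) :
    (({t : ℕ × ℕ × ℕ | t.2.2 ≤ 1 ∧
        4 * t.1 + 2 * m * t.2.1 + (2 * m + 2) * t.2.2 = k}).ncard : ℤ)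
      = ((k / 2 / 2 : ℕ) : ℤ) + ((k / 2 / 2 : ℕ) : ℤ) + ((k / 2 / m : ℕ) : ℤ)
        - ((k / 2 : ℕ) : ℤ) + 1 := by
  obtain ⟨r, rfl⟩ := hk
  have hset : {t : ℕ × ℕ × ℕ | t.2.2 ≤ 1 ∧
      4 * t.1 + 2 * m * t.2.1 + (2 * m + 2) * t.2.2 = r + r} = ↑(bdSol m r) := by
    ext ⟨a, b, c⟩
    simp only [Set.mem_setOf_eq, Finset.mem_coe, mem_bdSol hm]
    have h1 : 2 * m * b = 2 * (m * b) := by ring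
    have h2 : (2 * m + 2) * c = 2 * (m * c) + 2 * c := by ring
    omega
  rw [hset, Set.ncard_coe_finset, card_bdSol m hm r]
  have hk2 : (r + r) / 2 = r := by omega
  rw [hk2]
  generalize r / m = d
  omega
end

section
/- Fix integers p ≥ 1 and k ≥ 0. Then the number of pairs (a, b) of natural numbers with a + b = k and p dividing a − b (as integers) equals: 2⌊k/p⌋ + 1 if p is even and k is even; 0 if p is even and k is odd; 2⌊k/(2p)⌋ + 1 if p is odd and k is even; and 2(⌊(k − p)/(2p)⌋ + 1) if p is odd and k is odd and k ≥ p, and 0 if p is odd and k is odd and k < p. (This count is the number of base monomials α^a β^b of the lens space L(p,1) = S³/Z_p for wavenumber k, and multiplying by k + 1 gives the dimension of the eigenspace.) -/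
lemma count_mod (m k r : ℕ) (hr : r < m) (hrk : r ≤ k) :
    ((Finset.range (k+1)).filter (fun a => a % m = r)).card = (k - r)/m + 1 := by
  have hm : 0 < m := Nat.pos_of_ne_zero (by omega)
  have himg : (Finset.range (k+1)).filter (fun a => a % m = r)
      = (Finset.range ((k - r)/m + 1)).image (fun j => r + j*m) := by
    ext a
    simp only [Finset.mem_filter, Finset.mem_range, Finset.mem_image, Nat.lt_succ_iff]
    constructor
    · rintro ⟨hak, har⟩
      have hj := Nat.div_add_mod a m
      rw [har] at hj
      have hle : a / m * m ≤ k - r :=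
        Nat.le_sub_of_add_le (by rw [mul_comm]; exact le_of_eq_of_le hj hak)
      exact ⟨a/m, (Nat.le_div_iff_mul_le hm).mpr hle,
        by rw [add_comm, mul_comm]; exact hj⟩
    · rintro ⟨j, hj, rfl⟩
      have h2 : j * m ≤ k - r :=
        le_trans (Nat.mul_le_mul_right m hj) (Nat.div_mul_le_self _ _)
      refine ⟨le_trans (add_le_add_right h2 r) (le_of_eq (Nat.add_sub_cancel' hrk)), ?_⟩
      simp [Nat.add_mul_mod_self_right, Nat.mod_eq_of_lt hr]
  rw [himg, Finset.card_image_of_injective _ (fun x y h => by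
    exact Nat.eq_of_mul_eq_mul_right hm (Nat.add_left_cancel h)), Finset.card_range]

lemma ncard_eq (p k : ℕ) :
    ({q : ℕ × ℕ | q.1 + q.2 = k ∧ (p : ℤ) ∣ ((q.1 : ℤ) - (q.2 : ℤ))}).ncard
      = ((Finset.range (k+1)).filter (fun a : ℕ => (p:ℤ) ∣ 2*(a:ℤ) - (k:ℤ))).card := by
  have hset : {q : ℕ × ℕ | q.1 + q.2 = k ∧ (p : ℤ) ∣ ((q.1 : ℤ) - (q.2 : ℤ))}
      = ↑(((Finset.range (k+1)).filter (fun a : ℕ => (p:ℤ) ∣ 2*(a:ℤ) - (k:ℤ))).image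
          (fun a => (a, k - a))) := by
    ext ⟨a, b⟩
    simp only [Set.mem_setOf_eq, Finset.coe_image, Set.mem_image, Finset.mem_coe,
      Finset.mem_filter, Finset.mem_range, Nat.lt_succ_iff, Prod.mk.injEq]
    constructor
    · rintro ⟨hab, hd⟩
      refine ⟨a, ⟨by omega, ?_⟩, rfl, by omega⟩
      have h : 2*(a:ℤ) - k = (a:ℤ) - b := by omega
      rw [h]; exact hd
    · rintro ⟨x, ⟨hak, hd⟩, rfl, rfl⟩
      refine ⟨by omega, ?_⟩
      have h : (x:ℤ) - ((k - x : ℕ) : ℤ) = 2*(x:ℤ) - k := by omega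
      rw [h]; exact hd
  rw [hset, Set.ncard_coe_finset,
    Finset.card_image_of_injective _ (fun x y h => congrArg Prod.fst h)]

/-- For integers `p ≥ 1` and `k ≥ 0`, the number of pairs `(a, b)` of natural
numbers with `a + b = k` and `p ∣ a − b` (in `ℤ`) equals: `2⌊k/p⌋ + 1` if `p` even, `k` even;
`0` if `p` even, `k` odd; `2⌊k/(2p)⌋ + 1` if `p` odd, `k` even; `2(⌊(k−p)/(2p)⌋ + 1)` if `p`
odd, `k` odd and `k ≥ p`; and `0` if `p` odd, `k` odd and `k < p`.  This counts the base
monomials `αᵃβᵇ` of the lens space `L(p,1)` for wavenumber `k`. -/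
theorem lens_space_base_mode_count (p : ℕ) (hp : 1 ≤ p) (k : ℕ) :
    (({q : ℕ × ℕ | q.1 + q.2 = k ∧ (p : ℤ) ∣ ((q.1 : ℤ) - (q.2 : ℤ))}).ncard : ℤ)
      = if Even p then
          (if Even k then 2 * ((k / p : ℕ) : ℤ) + 1 else 0)
        else
          (if Even k then 2 * ((k / (2 * p) : ℕ) : ℤ) + 1
           else if p ≤ k then 2 * ((((k - p) / (2 * p) : ℕ) : ℤ) + 1) else 0) := by
  rw [ncard_eq]
  by_cases hpe : Even p
  · by_cases hke : Even k
    · -- p even, k even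
      rw [if_pos hpe, if_pos hke]
      obtain ⟨m, hpm⟩ := hpe
      obtain ⟨l, hkl⟩ := hke
      have hm0 : 0 < m := by omega
      have key : ∀ a : ℕ, ((p:ℤ) ∣ 2*(a:ℤ) - (k:ℤ)) ↔ a % m = l % m := by
        intro a
        have h1 : (2*(a:ℤ) - k) = 2 * ((a:ℤ) - l) := by rw [hkl]; push_cast; ring
        have h2 : (p:ℤ) = 2 * (m:ℤ) := by rw [hpm]; push_cast; ring
        rw [h1, h2, mul_dvd_mul_iff_left (two_ne_zero), ← Nat.modEq_iff_dvd]
        unfold Nat.ModEq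
        exact eq_comm
      rw [Finset.filter_congr (fun a _ => key a)]
      have hr : l % m < m := Nat.mod_lt _ hm0
      have hrk : l % m ≤ k := le_trans (Nat.mod_le l m) (by omega)
      rw [count_mod m k (l % m) hr hrk]
      set q := l / m with hq
      set r := l % m with hrdef
      have hdm : m * q + r = l := Nat.div_add_mod l m
      have h1 : k - r = r + m * (2*q) :=
        Nat.sub_eq_of_eq_add (by rw [hkl, ← hdm]; ring)
      have h2 : (k - r) / m = 2 * q := by
        rw [h1, Nat.add_mul_div_left _ _ hm0, Nat.div_eq_of_lt hr, zero_add]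
      have h3 : k / p = q := by
        have hk2 : k = 2 * r + p * q := by rw [hkl, ← hdm, hpm]; ring
        rw [hk2, Nat.add_mul_div_left _ _ (by omega : 0 < p),
          Nat.div_eq_of_lt (by omega : 2 * r < p), zero_add]
      rw [h2, h3]
      push_cast; ring
    · -- p even, k odd
      have hempty : (Finset.range (k+1)).filter (fun a : ℕ => (p:ℤ) ∣ 2*(a:ℤ) - (k:ℤ)) = ∅ := by
        rw [Finset.filter_eq_empty_iff]
        intro a _ hd
        have h2 : (2:ℤ) ∣ (p:ℤ) := by
          obtain ⟨m, hm⟩ := hpe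
          exact ⟨m, by push_cast [hm]; ring⟩
        obtain ⟨c, hc⟩ := h2.trans hd
        have hk1 : k % 2 = 1 := Nat.odd_iff.mp (Nat.not_even_iff_odd.mp hke)
        omega
      rw [hempty]
      simp [hpe, hke, Nat.not_even_iff_odd.mp hke]
  · have hpodd : Odd p := Nat.not_even_iff_odd.mp hpe
    have hco : IsCoprime ((p:ℤ)) 2 := by
      exact_mod_cast Nat.isCoprime_iff_coprime.mpr hpodd.coprime_two_right
    have hp0 : 0 < p := hp
    by_cases hke : Even k
    · -- p odd, k even
      rw [if_neg hpe, if_pos hke]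
      obtain ⟨l, hkl⟩ := hke
      have key : ∀ a : ℕ, ((p:ℤ) ∣ 2*(a:ℤ) - (k:ℤ)) ↔ a % p = l % p := by
        intro a
        have h1 : (2*(a:ℤ) - k) = 2 * ((a:ℤ) - l) := by rw [hkl]; push_cast; ring
        rw [h1]
        constructor
        · intro h
          have := hco.dvd_of_dvd_mul_left h
          rw [← Nat.modEq_iff_dvd] at this
          exact this.symm
        · intro h
          have : (p:ℤ) ∣ (a:ℤ) - l := Nat.modEq_iff_dvd.mp (Nat.ModEq.symm h)
          exact this.mul_left 2
      rw [Finset.filter_congr (fun a _ => key a)]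
      have hr : l % p < p := Nat.mod_lt _ hp0
      have hrk : l % p ≤ k := le_trans (Nat.mod_le l p) (by omega)
      rw [count_mod p k (l % p) hr hrk]
      set q := l / p with hq
      set r := l % p with hrdef
      have hdm : p * q + r = l := Nat.div_add_mod l p
      have h1 : k - r = r + p * (2*q) :=
        Nat.sub_eq_of_eq_add (by rw [hkl, ← hdm]; ring)
      have h2 : (k - r) / p = 2 * q := by
        rw [h1, Nat.add_mul_div_left _ _ hp0, Nat.div_eq_of_lt hr, zero_add]
      have h3 : k / (2*p) = q := by
        have hk2 : k = 2 * r + (2*p) * q := by rw [hkl, ← hdm]; ring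
        rw [hk2, Nat.add_mul_div_left _ _ (by omega : 0 < 2*p),
          Nat.div_eq_of_lt (by omega : 2 * r < 2*p), zero_add]
      rw [h2, h3]
      push_cast; ring
    · have hk1 : k % 2 = 1 := Nat.odd_iff.mp (Nat.not_even_iff_odd.mp hke)
      have hp1 : p % 2 = 1 := Nat.odd_iff.mp hpodd
      by_cases hpk : p ≤ k
      · -- p odd, k odd, p ≤ k
        set l := (k - p) / 2 with hldef
        have hl : k = p + 2 * l := by omega
        have key : ∀ a : ℕ, ((p:ℤ) ∣ 2*(a:ℤ) - (k:ℤ)) ↔ a % p = l % p := by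
          intro a
          have h1 : (2*(a:ℤ) - k) = 2 * ((a:ℤ) - l) - p * 1 := by rw [hl]; push_cast; ring
          rw [h1]
          constructor
          · intro h
            have h' : (p:ℤ) ∣ 2 * ((a:ℤ) - l) := by
              have := dvd_add h (Dvd.intro 1 rfl : (p:ℤ) ∣ p * 1)
              simpa using this
            have := hco.dvd_of_dvd_mul_left h'
            rw [← Nat.modEq_iff_dvd] at this
            exact this.symm
          · intro h
            have h' : (p:ℤ) ∣ (a:ℤ) - l := Nat.modEq_iff_dvd.mp (Nat.ModEq.symm h)
            exact dvd_sub (h'.mul_left 2) (Dvd.intro 1 rfl)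
        rw [Finset.filter_congr (fun a _ => key a)]
        have hr : l % p < p := Nat.mod_lt _ hp0
        have hrk : l % p ≤ k := le_trans (Nat.mod_le l p) (by omega)
        rw [count_mod p k (l % p) hr hrk]
        set q := l / p with hq
        set r := l % p with hrdef
        have hdm : p * q + r = l := Nat.div_add_mod l p
        have h1 : k - r = r + p * (2*q+1) :=
          Nat.sub_eq_of_eq_add (by rw [hl, ← hdm]; ring)
        have h2 : (k - r) / p = 2 * q + 1 := by
          rw [h1, Nat.add_mul_div_left _ _ hp0, Nat.div_eq_of_lt hr, zero_add]
        have h3 : (k - p) / (2*p) = q := by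
          have hk2 : k - p = 2 * r + (2*p) * q :=
            Nat.sub_eq_of_eq_add (by rw [hl, ← hdm]; ring)
          rw [hk2, Nat.add_mul_div_left _ _ (by omega : 0 < 2*p),
            Nat.div_eq_of_lt (by omega : 2 * r < 2*p), zero_add]
        rw [if_neg hpe, if_neg hke, if_pos hpk, h2, h3]
        push_cast; ring
      · -- p odd, k odd, k < p
        have hempty : (Finset.range (k+1)).filter (fun a : ℕ => (p:ℤ) ∣ 2*(a:ℤ) - (k:ℤ)) = ∅ := by
          rw [Finset.filter_eq_empty_iff]
          intro a ha hd
          rw [Finset.mem_range] at ha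
          by_cases hz : (2*(a:ℤ) - k) = 0
          · omega
          · have h1 : (p:ℤ) ≤ |2*(a:ℤ) - k| :=
              Int.le_of_dvd (abs_pos.mpr hz) ((dvd_abs _ _).mpr hd)
            have h2 : |2*(a:ℤ) - k| ≤ k := abs_le.mpr ⟨by omega, by omega⟩
            omega
        rw [hempty]
        simp [hpe, hke, hpk]
end
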